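/- arXiv:0802.4188 — 5 statements merged into one kernel-verified Lean document; each statement's English description precedes it below -/
import Mathlib

section
/- Let $D_t$ be a smooth affine variety over $\mathbb{C}$ and $f$ a regular function on $D_t$ with finitely many critical points, all isolated. Then $f$ restricted to $D_t$ is a Morse function (all critical points non-degenerate and all critical values pairwise distinct) if and only if the quotient ring $\mathbb{C}[D_t]/J_f$ (where $J_f$ is the Jacobian ideal of $f$) is generated as a $\mathbb{C}$-vector space by the powers $1, f, f^2, \dots$ of $f$. -/
/-!
Write `A = R ⧸ Jf` and `a` for the image of `f`. The critical points are the maximal ideals of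
the finite-dimensional algebra `A`, their residue fields are `ℂ`, and the critical values are the
residues of `a`.

If `f` is Morse, every maximal ideal of the Artinian ring `A` is idempotent, so by Nakayama no
nonzero element lies in all of them; as `a` takes pairwise distinct values at them, Lagrange
interpolation (the Vandermonde argument) writes every element of `A` as a polynomial in `a`.

Conversely, if `A = ℂ[a]`, then for a critical point `𝔪` with critical value `c` every element of
`A` is `P(c) + (a - c) Q(a)`, hence `𝔪 = Jf + (f - c)`: the critical value determines the point.
Non-degeneracy follows because `f - c ∈ 𝔪²`: since `Ω[R⁄ℂ]` is projective, every derivation into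
`R ⧸ 𝔪` lifts to a derivation of `R`, and those into `R ⧸ 𝔪` detect `𝔪 / 𝔪²`.
-/

open Polynomial

theorem Polynomial.span_range_pow_eq_top_iff {K A : Type*} [CommSemiring K] [CommSemiring A]
    [Algebra K A] (a : A) :
    Submodule.span K (Set.range (a ^ · : ℕ → A)) = ⊤ ↔
      Function.Surjective (aeval (R := K) a) := by
  rw [← AlgHom.range_eq_top, ← Algebra.adjoin_singleton_eq_range_aeval,
    ← Algebra.toSubmodule_eq_top, Algebra.adjoin_eq_span, ← Submonoid.powers_eq_closure,
    Submonoid.coe_powers]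

theorem Polynomial.sub_algebraMap_dvd_aeval_sub {K A : Type*} [CommRing K] [CommRing A]
    [Algebra K A] (a : A) (c : K) (P : K[X]) :
    a - algebraMap K A c ∣ aeval a P - algebraMap K A (P.eval c) := by
  simpa [eval_map_algebraMap, aeval_algebraMap_apply_eq_algebraMap_eval] using
    sub_dvd_eval_sub a (algebraMap K A c) (P.map (algebraMap K A))

theorem Ideal.exists_algHom_ker_eq {K R : Type*} [Field K] [IsAlgClosed K] [CommRing R]
    [Algebra K R] (M : Ideal R) [M.IsMaximal] [Module.Finite K (R ⧸ M)] :
    ∃ τ : R →ₐ[K] K, RingHom.ker τ = M := by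
  let := Ideal.Quotient.field M
  let e : K ≃ₐ[K] R ⧸ M :=
    AlgEquiv.ofBijective (Algebra.ofId K (R ⧸ M)) IsAlgClosed.algebraMap_bijective_of_isIntegral
  refine ⟨e.symm.toAlgHom.comp (Ideal.Quotient.mkₐ K M), ?_⟩
  ext x
  simp [RingHom.mem_ker, Ideal.Quotient.eq_zero_iff_mem]

theorem eq_zero_of_forall_isMaximal_mem {A : Type*} [CommRing A] [IsNoetherianRing A]
    (hidem : ∀ M : Ideal A, M.IsMaximal → M ≤ M * M) {x : A}
    (hx : ∀ M : Ideal A, M.IsMaximal → x ∈ M) : x = 0 := by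
  by_contra hx0
  obtain ⟨M, hM, hann⟩ := Ideal.exists_le_maximal (Ideal.torsionOf A A x)
    (by simpa [Ideal.torsionOf_eq_top_iff] using hx0)
  obtain ⟨r, hr1, hr0⟩ := Submodule.exists_sub_one_mem_and_smul_eq_zero_of_fg_of_le_smul
    M M (IsNoetherian.noetherian _) (by rw [Ideal.smul_eq_mul]; exact hidem M hM)
  -- Nakayama: `r ≡ 1 (mod M)` kills `M ∋ x`, so `r ∈ ann x ⊆ M`.
  have hrM : r ∈ M := hann ((Ideal.mem_torsionOf_iff x r).2 (hr0 x (hx M hM)))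
  exact hM.ne_top ((Ideal.eq_top_iff_one M).2 (by simpa using M.sub_mem hrM hr1))

theorem surjective_aeval_of_forall_isMaximal {K A : Type*} [Field K] [IsAlgClosed K]
    [CommRing A] [Algebra K A] [Module.Finite K A]
    (hidem : ∀ M : Ideal A, M.IsMaximal → M ≤ M * M) {a : A}
    (hsep : ∀ M M' : Ideal A, M.IsMaximal → M'.IsMaximal → ∀ c : K,
      a - algebraMap K A c ∈ M → a - algebraMap K A c ∈ M' → M = M') :
    Function.Surjective (aeval (R := K) a) := by
  have : IsNoetherianRing A := isNoetherian_of_tower K inferInstance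
  have : IsArtinianRing A := IsArtinianRing.of_finite K A
  let ι := {M : Ideal A // M.IsMaximal}
  have : Fintype ι := (IsArtinianRing.setOfPred_isMaximal_finite A).fintype
  choose τ hτ using fun M : ι => have := M.2; M.1.exists_algHom_ker_eq (K := K)
  have hτ_mem : ∀ M x, x - algebraMap K A (τ M x) ∈ M.1 := fun M x => by
    simp [← hτ M, RingHom.mem_ker]
  have hnodes : Set.InjOn (fun M => τ M a) (Finset.univ : Finset ι) := fun M _ M' _ h =>
    Subtype.ext (hsep M M' M.2 M'.2 _ (hτ_mem M a) (by simpa [h] using hτ_mem M' a))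
  intro g
  refine ⟨Lagrange.interpolate Finset.univ (fun M => τ M a) (fun M => τ M g), ?_⟩
  refine (sub_eq_zero.1 (eq_zero_of_forall_isMaximal_mem hidem fun M hM => ?_)).symm
  change _ ∈ (⟨M, hM⟩ : ι).1
  rw [← hτ, RingHom.mem_ker, map_sub, ← aeval_algHom_apply, coe_aeval_eq_eval,
    Lagrange.eval_interpolate_at_node _ hnodes (Finset.mem_univ _), sub_self]

theorem surjective_aeval_mk_of_isMaximal {K R : Type*} [Field K] [IsAlgClosed K] [CommRing R]
    [Algebra K R] {J : Ideal R} [Module.Finite K (R ⧸ J)] {f : R}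
    (hnondeg : ∀ 𝔪 : Ideal R, 𝔪.IsMaximal → J ≤ 𝔪 → 𝔪 ≤ J ⊔ 𝔪 * 𝔪)
    (hsep : ∀ 𝔪 𝔪' : Ideal R, 𝔪.IsMaximal → 𝔪'.IsMaximal → J ≤ 𝔪 → J ≤ 𝔪' → ∀ c : K,
      f - algebraMap K R c ∈ 𝔪 → f - algebraMap K R c ∈ 𝔪' → 𝔪 = 𝔪') :
    Function.Surjective (aeval (R := K) (Ideal.Quotient.mk J f)) := by
  have hmk := Ideal.Quotient.mk_surjective (I := J)
  have hmax : ∀ M : Ideal (R ⧸ J), M.IsMaximal → (M.comap (Ideal.Quotient.mk J)).IsMaximal :=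
    fun M _ => Ideal.comap_isMaximal_of_surjective _ hmk
  have hJ : ∀ M : Ideal (R ⧸ J), J ≤ M.comap (Ideal.Quotient.mk J) := fun M =>
    Ideal.mk_ker.symm.trans_le (Ideal.ker_le_comap _)
  have hmem : ∀ (M : Ideal (R ⧸ J)) (c : K),
      Ideal.Quotient.mk J f - algebraMap K _ c ∈ M ↔
        f - algebraMap K R c ∈ M.comap (Ideal.Quotient.mk J) := fun M c => by
    rw [Ideal.mem_comap, map_sub, Ideal.Quotient.mk_algebraMap]
  refine surjective_aeval_of_forall_isMaximal (fun M hM => ?_) fun M M' hM hM' c h h' => ?_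
  · have h𝔪 := hnondeg _ (hmax M hM) (hJ M)
    calc M = (M.comap _).map (Ideal.Quotient.mk J) :=
          (Ideal.map_comap_of_surjective _ hmk M).symm
      _ ≤ (J ⊔ M.comap _ * M.comap _).map (Ideal.Quotient.mk J) := Ideal.map_mono h𝔪
      _ = M * M := by
        rw [Ideal.map_sup, Ideal.map_mul, Ideal.map_quotient_self, bot_sup_eq,
          Ideal.map_comap_of_surjective _ hmk]
  · exact Ideal.comap_injective_of_surjective _ hmk <|
      hsep _ _ (hmax M hM) (hmax M' hM') (hJ M) (hJ M') c ((hmem M c).1 h) ((hmem M' c).1 h')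

theorem le_sup_span_sub_of_surjective_aeval {K R : Type*} [Field K] [CommRing R] [Algebra K R]
    {J M : Ideal R} {f : R} (hspan : Function.Surjective (aeval (R := K) (Ideal.Quotient.mk J f)))
    (hJM : J ≤ M) (hM : M ≠ ⊤) {c : K} (hc : f - algebraMap K R c ∈ M) :
    M ≤ J ⊔ Ideal.span {f - algebraMap K R c} := by
  intro x hx
  obtain ⟨P, hP⟩ := hspan (Ideal.Quotient.mk J x)
  have hxP : x - aeval f P ∈ J := by
    rw [← Ideal.Quotient.eq, ← hP, ← Ideal.Quotient.mkₐ_eq_mk K, aeval_algHom_apply]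
  have hPc : aeval f P - algebraMap K R (P.eval c) ∈ Ideal.span {f - algebraMap K R c} :=
    Ideal.mem_span_singleton.2 (sub_algebraMap_dvd_aeval_sub f c P)
  have hxc : x - algebraMap K R (P.eval c) ∈ J ⊔ Ideal.span {f - algebraMap K R c} := by
    simpa using Ideal.add_mem _ (Ideal.mem_sup_left hxP) (Ideal.mem_sup_right hPc)
  have hPc0 : P.eval c = 0 := by
    by_contra h
    refine hM (M.eq_top_of_isUnit_mem ?_ ((isUnit_iff_ne_zero.2 h).map (algebraMap K R)))
    simpa using M.sub_mem hx (sup_le hJM ((Ideal.span_singleton_le_iff_mem _).2 hc) hxc)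
  simpa [hPc0] using hxc

theorem Derivation.exists_compDer_eq {K R M N : Type*} [CommRing K] [CommRing R] [Algebra K R]
    [AddCommGroup M] [Module R M] [Module K M] [IsScalarTower K R M]
    [AddCommGroup N] [Module R N] [Module K N] [IsScalarTower K R N]
    [Module.Projective R Ω[R⁄K]] (π : M →ₗ[R] N) (hπ : Function.Surjective π)
    (D : Derivation K R N) : ∃ ξ : Derivation K R M, π.compDer ξ = D := by
  obtain ⟨h, hh⟩ := Module.projective_lifting_property π D.liftKaehlerDifferential hπ
  refine ⟨h.compDer (KaehlerDifferential.D K R), Derivation.ext fun x => ?_⟩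
  change (π ∘ₗ h) (KaehlerDifferential.D K R x) = D x
  rw [hh]
  exact D.liftKaehlerDifferential_comp_D x

theorem exists_derivation_apply_ne_zero {K R : Type*} [Field K] [CommRing R] [Algebra K R]
    (τ : R →ₐ[K] K) {g : R} (hg : g ∈ RingHom.ker τ)
    (hg2 : g ∉ RingHom.ker τ * RingHom.ker τ) :
    ∃ D : Derivation K R (R ⧸ RingHom.ker τ), D g ≠ 0 := by
  set M := RingHom.ker τ
  let N : Submodule K R := (M * M).restrictScalars K
  obtain ⟨φ, hφ⟩ : ∃ φ : Module.Dual K (R ⧸ N), φ (N.mkQ g) ≠ 0 := by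
    by_contra! h
    exact hg2 ((Submodule.Quotient.mk_eq_zero N).1 ((Module.forall_dual_apply_eq_zero_iff K _).1 h))
  let σ : R →ₗ[K] R := LinearMap.id - Algebra.linearMap K R ∘ₗ τ.toLinearMap
  have hσ : ∀ x, σ x = x - algebraMap K R (τ x) := fun x => rfl
  have hσ_mem : ∀ x, σ x ∈ M := fun x => by simp [hσ, M, RingHom.mem_ker]
  have hsmul : ∀ (x : R) (k : K),
      x • algebraMap K (R ⧸ M) k = algebraMap K (R ⧸ M) (τ x * k) := fun x k => by
    have hx : Ideal.Quotient.mk M x = algebraMap K (R ⧸ M) (τ x) := by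
      rw [← Ideal.Quotient.mk_algebraMap, Ideal.Quotient.eq, ← hσ]
      exact hσ_mem x
    rw [Algebra.smul_def, Ideal.Quotient.algebraMap_eq, hx, map_mul]
  let Dlin : R →ₗ[K] R ⧸ M := Algebra.linearMap K (R ⧸ M) ∘ₗ φ ∘ₗ N.mkQ ∘ₗ σ
  have hD : ∀ x, Dlin x = algebraMap K (R ⧸ M) (φ (N.mkQ (σ x))) := fun x => rfl
  -- `σ` is a derivation modulo `M²` because `σ x * σ y ∈ M²`.
  have hσ_mul : ∀ x y, N.mkQ (σ (x * y)) = τ x • N.mkQ (σ y) + τ y • N.mkQ (σ x) := by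
    intro x y
    have hsq : N.mkQ (σ x * σ y) = 0 :=
      (Submodule.Quotient.mk_eq_zero N).2 (Ideal.mul_mem_mul (hσ_mem x) (hσ_mem y))
    have hsplit : σ (x * y) = τ x • σ y + τ y • σ x + σ x * σ y := by
      simp only [hσ, map_mul, Algebra.smul_def]
      ring
    rw [hsplit, map_add, hsq, add_zero, map_add, map_smul, map_smul]
  refine ⟨Derivation.mk' Dlin fun x y => ?_, ?_⟩
  · rw [hD, hD, hD, hσ_mul, hsmul, hsmul, ← map_add, map_add, map_smul, map_smul, smul_eq_mul,
      smul_eq_mul]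
  · have : Nontrivial (R ⧸ M) := Ideal.Quotient.nontrivial_iff.2 (RingHom.ker_ne_top τ)
    simpa [hD, hσ, show τ g = 0 from hg] using
      (map_ne_zero_iff _ (algebraMap K (R ⧸ M)).injective).2 hφ

theorem mem_ker_mul_ker_of_forall_derivation_mem {K R : Type*} [Field K] [CommRing R]
    [Algebra K R] [Module.Projective R Ω[R⁄K]] (τ : R →ₐ[K] K) {g : R}
    (hg : g ∈ RingHom.ker τ) (hder : ∀ ξ : Derivation K R R, ξ g ∈ RingHom.ker τ) :
    g ∈ RingHom.ker τ * RingHom.ker τ := by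
  by_contra hg2
  obtain ⟨D, hD⟩ := exists_derivation_apply_ne_zero τ hg hg2
  obtain ⟨ξ, rfl⟩ := Derivation.exists_compDer_eq (Algebra.linearMap R (R ⧸ RingHom.ker τ))
    Ideal.Quotient.mk_surjective D
  exact hD (Ideal.Quotient.eq_zero_iff_mem.2 (hder ξ))

theorem stmt0_general (R : Type) [CommRing R] [Algebra ℂ R]
    [Algebra.FormallySmooth ℂ R]
    (f : R) (Jf : Ideal R)
    (hJf : Jf = Ideal.span {x : R | ∃ ξ : Derivation ℂ R R, ξ f = x})
    (hiso : FiniteDimensional ℂ (R ⧸ Jf)) :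
    ((∀ 𝔪 : Ideal R, 𝔪.IsMaximal → Jf ≤ 𝔪 → 𝔪 ≤ Jf ⊔ 𝔪 * 𝔪) ∧
      (∀ 𝔪 𝔪' : Ideal R, 𝔪.IsMaximal → 𝔪'.IsMaximal → Jf ≤ 𝔪 → Jf ≤ 𝔪' →
        ∀ c : ℂ, f - algebraMap ℂ R c ∈ 𝔪 → f - algebraMap ℂ R c ∈ 𝔪' → 𝔪 = 𝔪')) ↔
    Submodule.span ℂ (Set.range fun k : ℕ => (Ideal.Quotient.mk Jf f) ^ k) = ⊤ := by
  rw [span_range_pow_eq_top_iff]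
  refine ⟨fun ⟨hnondeg, hsep⟩ => surjective_aeval_mk_of_isMaximal hnondeg hsep, fun hspan => ?_⟩
  have hpoint : ∀ 𝔪 : Ideal R, 𝔪.IsMaximal → Jf ≤ 𝔪 → ∃ τ : R →ₐ[ℂ] ℂ, RingHom.ker τ = 𝔪 :=
    fun 𝔪 _ hJm =>
      have : Module.Finite ℂ (R ⧸ 𝔪) := Module.Finite.of_surjective
        (Ideal.Quotient.factorₐ ℂ hJm).toLinearMap (Ideal.Quotient.factor_surjective hJm)
      𝔪.exists_algHom_ker_eq
  refine ⟨fun 𝔪 hm hJm => ?_, fun 𝔪 𝔪' hm hm' hJm hJm' c hc hc' => ?_⟩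
  · obtain ⟨τ, rfl⟩ := hpoint 𝔪 hm hJm
    have hτf : f - algebraMap ℂ R (τ f) ∈ RingHom.ker τ := by simp [RingHom.mem_ker]
    have hsq := mem_ker_mul_ker_of_forall_derivation_mem τ hτf fun ξ => by
      simpa using hJm (hJf ▸ Ideal.subset_span ⟨ξ, rfl⟩)
    exact (le_sup_span_sub_of_surjective_aeval hspan hJm hm.ne_top hτf).trans
      (sup_le_sup_left ((Ideal.span_singleton_le_iff_mem _).2 hsq) _)
  · exact hm.eq_of_le hm'.ne_top
      ((le_sup_span_sub_of_surjective_aeval hspan hJm hm.ne_top hc).trans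
        (sup_le hJm' ((Ideal.span_singleton_le_iff_mem _).2 hc')))

/-- Morse characterisation by powers of `f`.  `R` models the coordinate ring
`ℂ[D_t]` of a smooth affine complex variety (smoothness: `Algebra.FormallySmooth`,
affine of finite type: `Algebra.FiniteType`), `f ∈ R` a regular function and
`Jf = df(Der(R)) = {ξ(f) : ξ a derivation}` its Jacobian ideal; the hypothesis
`FiniteDimensional ℂ (R ⧸ Jf)` says that `f` has finitely many critical points, all
isolated.  Then `f` is a Morse function — every critical point is non-degenerate
(the local Milnor algebra at each maximal ideal `𝔪 ⊇ Jf` is one-dimensional,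
equivalently `𝔪 ⊆ Jf + 𝔪²`) and the critical values are pairwise distinct (two
critical points sharing the value `c` of `f` coincide) — if and only if the quotient
`R/Jf` is spanned over `ℂ` by the powers `1, f, f², …` of `f`. -/
theorem stmt0 (R : Type) [CommRing R] [Algebra ℂ R]
    [Algebra.FormallySmooth ℂ R] [Algebra.FiniteType ℂ R]
    (f : R) (Jf : Ideal R)
    (hJf : Jf = Ideal.span {x : R | ∃ ξ : Derivation ℂ R R, ξ f = x})
    (hiso : FiniteDimensional ℂ (R ⧸ Jf)) :
    ((∀ 𝔪 : Ideal R, 𝔪.IsMaximal → Jf ≤ 𝔪 → 𝔪 ≤ Jf ⊔ 𝔪 * 𝔪) ∧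
      (∀ 𝔪 𝔪' : Ideal R, 𝔪.IsMaximal → 𝔪'.IsMaximal → Jf ≤ 𝔪 → Jf ≤ 𝔪' →
        ∀ c : ℂ, f - algebraMap ℂ R c ∈ 𝔪 → f - algebraMap ℂ R c ∈ 𝔪' → 𝔪 = 𝔪')) ↔
    Submodule.span ℂ (Set.range fun k : ℕ => (Ideal.Quotient.mk Jf f) ^ k) = ⊤ :=
  stmt0_general R f Jf hJf hiso
end

section
/- Let $f$ be a linear function on $\mathbb{C}^n$, $h$ homogeneous, $D_t = h^{-1}(t)$ for $t \neq 0$ smooth, and let $p \in D_t$ be a point where the affine tangent space $T_p D_t$ equals $\{f = 0\}$ (i.e. $d_p h$ is a nonzero scalar multiple of $f$). If the Hessian determinant $H$ of $h$ does not vanish at $p$, then $p$ is a non-degenerate critical point of $f|_{D_t}$, i.e. $\mu(f|_{D_t}; p) = 1$. (Via a local parametrisation $\varphi$ of $D_t$ at $p$, the Hessian of $f\circ\varphi$ equals, up to nonzero scalar, ${}^t[\partial\varphi/\partial u]\,[\partial^2 h/\partial x\partial x]\,[\partial\varphi/\partial u]$.) -/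
/-!
By Euler's identity, `∇h(p) ⬝ p = d t ≠ 0` and `Hess h(p) *ᵥ p = (d - 1) ∇h(p)`. The first says that
`p` is transverse to the tangent space `ker ∇h(p)` spanned by the columns of `J`, so `K = [J | p]`
is invertible; the second that `Jᵀ Hess h(p) p = (d - 1) Jᵀ ∇h(p) = 0`, so `Kᵀ Hess h(p) K` is block
triangular. Hence `det (Jᵀ Hess h(p) J) * (pᵀ Hess h(p) p) = det K ^ 2 * H(p) ≠ 0`.
-/

open MvPolynomial Matrix

namespace MvPolynomial

variable {R σ : Type*} {n : ℕ}

section CommSemiring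

variable [CommSemiring R] {φ : MvPolynomial σ R}

theorem IsHomogeneous.pderiv_eq_zero_of_zero (hφ : φ.IsHomogeneous 0) (i : σ) :
    pderiv i φ = 0 := by
  rw [← totalDegree_zero_iff_isHomogeneous, totalDegree_eq_zero_iff_eq_C] at hφ
  rw [hφ, pderiv_C]

theorem IsHomogeneous.sum_X_mul_pderiv_pderiv_add_pderiv [Fintype σ] [DecidableEq σ]
    (hφ : φ.IsHomogeneous n) (i : σ) :
    ∑ j, X j * pderiv i (pderiv j φ) + pderiv i φ = n • pderiv i φ := by
  have := congrArg (pderiv i) hφ.sum_X_mul_pderiv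
  simp only [map_sum, map_nsmul, Derivation.leibniz, pderiv_X, smul_eq_mul,
    Finset.sum_add_distrib] at this
  simpa [Pi.single_apply, mul_comm] using this

end CommSemiring

variable [CommRing R] [Fintype σ] {φ : MvPolynomial σ R}

theorem IsHomogeneous.dotProduct_gradient (hφ : φ.IsHomogeneous n) (x : σ → R) :
    x ⬝ᵥ (fun i => eval x (pderiv i φ)) = n * eval x φ := by
  simpa [dotProduct] using congrArg (eval x) hφ.sum_X_mul_pderiv

theorem IsHomogeneous.hessian_mulVec [DecidableEq σ] (hφ : φ.IsHomogeneous n) (x : σ → R) :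
    (of fun i j => eval x (pderiv i (pderiv j φ))) *ᵥ x
      = ((n : R) - 1) • fun i => eval x (pderiv i φ) := by
  ext i
  have := congrArg (eval x) (hφ.sum_X_mul_pderiv_pderiv_add_pderiv i)
  simp only [map_add, map_sum, map_mul, eval_X, nsmul_eq_mul, map_natCast] at this
  simp only [mulVec, dotProduct, of_apply, Pi.smul_apply, smul_eq_mul, mul_comm _ (x _)]
  linear_combination this

end MvPolynomial

namespace Matrix

variable {F : Type*} [Field F] {n m : Type*} [Fintype n] [Fintype m]

theorem det_transpose_mul_mul_ne_zero [DecidableEq n] {k : Type*} [Fintype k] [DecidableEq k]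
    {M : Matrix n n F} {K : Matrix n k F}
    (hcard : Fintype.card n ≤ Fintype.card k) (hK : LinearIndependent F K.col)
    (hM : M.det ≠ 0) : (Kᵀ * M * K).det ≠ 0 := by
  have hk : Fintype.card k ≤ Fintype.card n := by
    simpa using hK.fintype_card_le_finrank
  obtain ⟨e⟩ : Nonempty (n ≃ k) := Fintype.card_eq.mp (le_antisymm hcard hk)
  have hK' : IsUnit (K.submatrix id e) :=
    linearIndependent_cols_iff_isUnit.mp (hK.comp e e.injective)
  rw [← det_submatrix_equiv_self e]
  change ((K.submatrix id e)ᵀ * M * K.submatrix id e).det ≠ 0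
  rw [det_mul, det_mul, det_transpose]
  have := (isUnit_iff_isUnit_det _).mp hK'
  exact mul_ne_zero (mul_ne_zero this.ne_zero hM) this.ne_zero

theorem det_transpose_fromCols_mul_mul_fromCols {R : Type*} [CommRing R] [DecidableEq m]
    {o : Type*} [Fintype o] [DecidableEq o] (M : Matrix n n R) (J : Matrix n m R)
    (V : Matrix n o R) (hJV : Jᵀ * M * V = 0) :
    ((fromCols J V)ᵀ * M * fromCols J V).det = (Jᵀ * M * J).det * (Vᵀ * M * V).det := by
  rw [transpose_fromCols, fromRows_mul, fromRows_mul, mul_fromCols, mul_fromCols,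
    fromRows_fromCols_eq_fromBlocks, hJV, det_fromBlocks_zero₁₂]

theorem linearIndependent_col_fromCols_replicateCol {J : Matrix n m F} {p g : n → F}
    (hJ : LinearIndependent F J.col) (hgJ : g ᵥ* J = 0) (hgp : g ⬝ᵥ p ≠ 0) :
    LinearIndependent F (fromCols J (replicateCol Unit p)).col := by
  rw [← mulVec_injective_iff, ← coe_mulVecLin, ← LinearMap.ker_eq_bot,
    ker_mulVecLin_eq_bot_iff]
  intro c hc
  rw [fromCols_mulVec] at hc
  have hcol : replicateCol Unit p *ᵥ (c ∘ Sum.inr) = c (Sum.inr ()) • p := by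
    ext i; simp [mulVec, dotProduct, mul_comm]
  rw [hcol] at hc
  have hlast : c (Sum.inr ()) = 0 := by
    have := congrArg (g ⬝ᵥ ·) hc
    simpa [dotProduct_mulVec, hgJ, hgp] using this
  rw [hlast, zero_smul, add_zero] at hc
  have hinl : c ∘ Sum.inl = 0 := mulVec_injective_iff.mpr hJ (hc.trans (mulVec_zero J).symm)
  ext (j | u)
  · exact congrFun hinl j
  · exact hlast

theorem det_transpose_mul_mul_ne_zero_of_mulVec_eq_smul [DecidableEq n] [DecidableEq m]
    {M : Matrix n n F} {J : Matrix n m F} {p g : n → F} {c : F}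
    (hcard : Fintype.card n ≤ Fintype.card m + 1) (hJ : LinearIndependent F J.col)
    (hMp : M *ᵥ p = c • g) (hgJ : g ᵥ* J = 0) (hgp : g ⬝ᵥ p ≠ 0) (hM : M.det ≠ 0) :
    (Jᵀ * M * J).det ≠ 0 := by
  have hJMp : Jᵀ * M * replicateCol Unit p = 0 := by
    rw [Matrix.mul_assoc, ← replicateCol_mulVec, ← replicateCol_mulVec, hMp, mulVec_smul,
      mulVec_transpose, hgJ, smul_zero, replicateCol_zero]
  have hK := det_transpose_mul_mul_ne_zero (by simpa using hcard)
    (linearIndependent_col_fromCols_replicateCol hJ hgJ hgp) hM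
  rw [det_transpose_fromCols_mul_mul_fromCols _ _ _ hJMp] at hK
  exact left_ne_zero_of_mul hK

end Matrix

/-- Non-degeneracy of critical points from the Hessian of `h`.  Let `h` be homogeneous,
`p ∈ D_t = h⁻¹(t)` with `t ≠ 0`, and suppose `p` is a critical point of the linear
function `f` on `D_t`, i.e. the tangent space `T_p D_t = ker d_p h` equals `{f = 0}`.
The tangent space is spanned by the (linearly independent) columns of the matrix `J`
(the derivative of a local parametrisation `φ` of `D_t` at `p`).  If the Hessian
determinant `H(p) = det(∂²h/∂xᵢ∂xⱼ)(p)` is non-zero, then the Hessian of `f∘φ`,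
which up to a non-zero scalar is `ᵀJ · Hess(h)(p) · J`, is non-degenerate; i.e.
`μ(f|_{D_t}; p) = 1`. -/
theorem stmt10 (n d : ℕ) (h : MvPolynomial (Fin n) ℂ) (hhom : h.IsHomogeneous d)
    (p : Fin n → ℂ) (t : ℂ) (ht : t ≠ 0) (hpt : eval p h = t)
    (J : Matrix (Fin n) (Fin (n - 1)) ℂ)
    (htangent : ∀ j : Fin (n - 1), (∑ i : Fin n, eval p (pderiv i h) * J i j) = 0)
    (hindep : LinearIndependent ℂ (fun j : Fin (n - 1) => fun i : Fin n => J i j))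
    (hH : Matrix.det (Matrix.of fun i j : Fin n => eval p (pderiv i (pderiv j h))) ≠ 0) :
    Matrix.det (J.transpose * (Matrix.of fun i j : Fin n => eval p (pderiv i (pderiv j h))) * J)
      ≠ 0 := by
  obtain rfl | hn := Nat.eq_zero_or_pos n
  · simp [det_isEmpty]
  have hd : d ≠ 0 := by
    rintro rfl
    have : Nonempty (Fin n) := ⟨⟨0, hn⟩⟩
    apply hH
    simp only [hhom.pderiv_eq_zero_of_zero, map_zero]
    exact det_zero
  refine det_transpose_mul_mul_ne_zero_of_mulVec_eq_smul
    (by simp only [Fintype.card_fin]; omega) hindep (hhom.hessian_mulVec p) (funext htangent) ?_ hH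
  rw [dotProduct_comm, hhom.dotProduct_gradient, hpt]
  exact mul_ne_zero (Nat.cast_ne_zero.mpr hd) ht
end

section
/- Let $G$ be a free $\mathbb{C}[t,\tau^{-1}]$-module of rank $n$ with basis $\underline{\omega}$ and a connection operator $\partial_\tau$ acting by $\partial_\tau(\underline{\omega}) = \underline{\omega}\cdot(\Omega_0 + \tau^{-1}A_\infty)$, where $\Omega_0$ is the companion-type matrix with subdiagonal entries $1$, top-right entry $c_0 t$ ($c_0 \neq 0$) and zeros elsewhere, and $A_\infty = \mathrm{diag}(-\nu_1,\dots,-\nu_n)$ with $\nu_i - \nu_{i-1} \le 1$ for $2 \le i \le n$ (and additionally $\nu_1 - \nu_n \le 1$ if $t \neq 0$). Define the filtration $\widetilde V_\alpha$ of $\mathbf{G} = G[\tau]$ by declaring $\deg(\tau^k\omega_i) = \nu_i - k$. Then for every $\alpha$, the operator $\tau\partial_\tau + \alpha$ is nilpotent on $\mathrm{gr}^{\widetilde V}_\alpha\mathbf{G}$. -/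
/-! The basis vector `τ^k ωᵢ` has degree `νᵢ - k`, and `τ∂_τ + α` sends it to
`(α - (νᵢ - k)) τ^k ωᵢ + cᵢ τ^{k+1} ω_{i+1}` with `cᵢ = stepCoeff c i`. The spacing condition
`ν_{i+1} ≤ νᵢ + 1`, required wherever `cᵢ ≠ 0`, says that the second term never has larger
degree. Hence `Ṽ_{<α}` is stable, and modulo `Ṽ_{<α}` a basis vector of degree exactly `α` is
either killed or moved to `τ^{k+1} ω_{i+1}`, again of degree `α`. After `n` moves it would be
back at `τ^{k+n} ωᵢ`, of degree `α - n < α`; so `(τ∂_τ + α)^n` maps `Ṽ_α` into `Ṽ_{<α}`. -/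

/-- The operator `τ∂_τ` on the Gauss–Manin system `𝐆`, in the `ℂ`-basis
`τ^k ωᵢ` (indexed by `(k, i) : ℤ × Fin n`):
`τ∂_τ(τ^k ωᵢ) = (k - νᵢ) τ^k ωᵢ + τ^{k+1} ω_{i+1}` for `i < n-1`, and
`τ∂_τ(τ^k ω_{n-1}) = (k - ν_{n-1}) τ^k ω_{n-1} + c · τ^{k+1} ω₀` with `c = c₀ t`,
coming from `∂_τ(ω) = ω (Ω₀ + τ⁻¹ A_∞)` with `Ω₀` the companion-type matrix and
`A_∞ = diag(-ν₁,…,-νₙ)`. -/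
noncomputable def stmt16T (n : ℕ) [NeZero n] (ν : Fin n → ℚ) (c : ℂ) :
    ((ℤ × Fin n) →₀ ℂ) →ₗ[ℂ] ((ℤ × Fin n) →₀ ℂ) :=
  Finsupp.lsum ℂ fun p => LinearMap.toSpanSingleton ℂ _
    (((p.1 : ℂ) - (ν p.2 : ℂ)) • Finsupp.single p (1 : ℂ)
      + (if (p.2 : ℕ) + 1 = n then c else 1) • Finsupp.single (p.1 + 1, p.2 + 1) (1 : ℂ))

namespace GaussManin

open Finsupp Submodule Fin.NatCast

variable {n : ℕ}

def stepCoeff (c : ℂ) (i : Fin n) : ℂ := if (i : ℕ) + 1 = n then c else 1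

def deg (ν : Fin n → ℚ) (p : ℤ × Fin n) : ℚ := ν p.2 - p.1

noncomputable abbrev Vle (ν : Fin n → ℚ) (α : ℚ) : Submodule ℂ ((ℤ × Fin n) →₀ ℂ) :=
  span ℂ {y | ∃ (k : ℤ) (i : Fin n), ν i - (k : ℚ) ≤ α ∧ y = single (k, i) (1 : ℂ)}

noncomputable abbrev Vlt (ν : Fin n → ℚ) (α : ℚ) : Submodule ℂ ((ℤ × Fin n) →₀ ℂ) :=
  span ℂ {y | ∃ (k : ℤ) (i : Fin n), ν i - (k : ℚ) < α ∧ y = single (k, i) (1 : ℂ)}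

lemma single_mem_Vlt (ν : Fin n → ℚ) (α : ℚ) {p : ℤ × Fin n} (hp : deg ν p < α) :
    single p (1 : ℂ) ∈ Vlt ν α :=
  subset_span ⟨p.1, p.2, hp, rfl⟩

variable [NeZero n]

def step (p : ℤ × Fin n) : ℤ × Fin n := (p.1 + 1, p.2 + 1)

lemma le_add_one_of_stepCoeff_ne_zero {ν : Fin n → ℚ} {c : ℂ}
    (h1 : ∀ i j : Fin n, (i : ℕ) + 1 = (j : ℕ) → ν j - ν i ≤ 1)
    (h2 : c ≠ 0 →
      ν ⟨0, Nat.pos_of_ne_zero (NeZero.ne n)⟩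
        - ν ⟨n - 1, Nat.sub_lt (Nat.pos_of_ne_zero (NeZero.ne n)) Nat.one_pos⟩ ≤ 1)
    (i : Fin n) (hi : stepCoeff c i ≠ 0) : ν (i + 1) ≤ ν i + 1 := by
  by_cases hlast : (i : ℕ) + 1 = n
  · have hc : c ≠ 0 := by simpa [stepCoeff, hlast] using hi
    have hzero : i + 1 = ⟨0, Nat.pos_of_ne_zero (NeZero.ne n)⟩ := by
      ext; rw [Fin.val_add, Fin.val_one', Nat.add_mod_mod, hlast, Nat.mod_self]
    have hi' : i = ⟨n - 1, Nat.sub_lt (Nat.pos_of_ne_zero (NeZero.ne n)) Nat.one_pos⟩ := by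
      ext; simp only; omega
    rw [hzero, hi']
    linarith [h2 hc]
  · linarith [h1 i (i + 1) (Fin.val_add_one_of_lt' (by omega)).symm]

noncomputable def shiftedT (ν : Fin n → ℚ) (c : ℂ) (α : ℚ) : Module.End ℂ ((ℤ × Fin n) →₀ ℂ) :=
  stmt16T n ν c + (α : ℂ) • LinearMap.id

lemma step_iterate (m : ℕ) (p : ℤ × Fin n) : step^[m] p = (p.1 + m, p.2 + (m : Fin n)) := by
  induction m with
  | zero => simp
  | succ m ih =>
    rw [Function.iterate_succ_apply', ih, step]
    ext <;> simp [add_assoc]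

lemma deg_step_iterate_self (ν : Fin n → ℚ) (p : ℤ × Fin n) :
    deg ν (step^[n] p) = deg ν p - n := by
  simp only [step_iterate, deg, Fin.natCast_self, add_zero]
  push_cast
  ring

variable (ν : Fin n → ℚ) (c : ℂ) (α : ℚ)

lemma shiftedT_single (p : ℤ × Fin n) :
    shiftedT ν c α (single p 1) =
      ((α - deg ν p : ℚ) : ℂ) • single p 1 + stepCoeff c p.2 • single (step p) 1 := by
  simp only [shiftedT, stmt16T, LinearMap.add_apply, lsum_single, LinearMap.toSpanSingleton_apply,
    LinearMap.smul_apply, LinearMap.id_apply, stepCoeff, step, deg, one_smul]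
  push_cast
  module

variable {ν c α} (hν : ∀ i, stepCoeff c i ≠ 0 → ν (i + 1) ≤ ν i + 1)
include hν

lemma deg_step_le {p : ℤ × Fin n} (hp : stepCoeff c p.2 ≠ 0) : deg ν (step p) ≤ deg ν p := by
  have := hν p.2 hp
  simp only [deg, step]
  push_cast
  linarith

lemma shiftedT_single_mem_Vlt {p : ℤ × Fin n} (hp : deg ν p < α) :
    shiftedT ν c α (single p 1) ∈ Vlt ν α := by
  rw [shiftedT_single]
  refine add_mem (smul_mem _ _ (single_mem_Vlt ν α hp)) ?_
  by_cases hc : stepCoeff c p.2 = 0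
  · simp [hc]
  · exact smul_mem _ _ (single_mem_Vlt ν α ((deg_step_le hν hc).trans_lt hp))

lemma shiftedT_mem_Vlt {x : (ℤ × Fin n) →₀ ℂ} (hx : x ∈ Vlt ν α) :
    shiftedT ν c α x ∈ Vlt ν α := by
  refine (span_le (p := (Vlt ν α).comap (shiftedT ν c α))).mpr ?_ hx
  rintro _ ⟨k, i, hki, rfl⟩
  exact shiftedT_single_mem_Vlt hν (p := (k, i)) hki

lemma shiftedT_single_of_deg_eq {p : ℤ × Fin n} (hp : deg ν p = α) :
    shiftedT ν c α (single p 1) ∈ Vlt ν α ∨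
      shiftedT ν c α (single p 1) = stepCoeff c p.2 • single (step p) 1 ∧ deg ν (step p) = α := by
  have hL : shiftedT ν c α (single p 1) = stepCoeff c p.2 • single (step p) 1 := by
    rw [shiftedT_single, hp, sub_self, Rat.cast_zero, zero_smul, zero_add]
  rw [hL]
  by_cases hc : stepCoeff c p.2 = 0
  · simp [hc]
  rcases (deg_step_le hν hc).trans_eq hp |>.lt_or_eq with hlt | heq
  · exact .inl (smul_mem _ _ (single_mem_Vlt ν α hlt))
  · exact .inr ⟨rfl, heq⟩

lemma shiftedT_pow_single_of_deg_eq (m : ℕ) {p : ℤ × Fin n} (hp : deg ν p = α) :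
    (shiftedT ν c α ^ m) (single p 1) ∈ Vlt ν α ∨
      ∃ a : ℂ, (shiftedT ν c α ^ m) (single p 1) = a • single (step^[m] p) 1 ∧
        deg ν (step^[m] p) = α := by
  induction m generalizing p with
  | zero => exact .inr ⟨1, by simp, hp⟩
  | succ m ih =>
    rw [pow_succ, Module.End.mul_apply, Function.iterate_succ_apply]
    rcases shiftedT_single_of_deg_eq hν hp with hlt | ⟨hL, hstep⟩
    · exact .inl (Module.End.pow_apply_mem_of_forall_mem m (fun _ => shiftedT_mem_Vlt hν) _ hlt)
    rw [hL, map_smul]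
    rcases ih hstep with hlt | ⟨a, ha, hdeg⟩
    · exact .inl (smul_mem _ _ hlt)
    · exact .inr ⟨stepCoeff c p.2 * a, by rw [ha, smul_smul], hdeg⟩

lemma shiftedT_pow_single_mem_Vlt {p : ℤ × Fin n} (hp : deg ν p ≤ α) :
    (shiftedT ν c α ^ n) (single p 1) ∈ Vlt ν α := by
  rcases hp.lt_or_eq with hlt | heq
  · exact Module.End.pow_apply_mem_of_forall_mem n (fun _ => shiftedT_mem_Vlt hν) _
      (single_mem_Vlt ν α hlt)
  rcases shiftedT_pow_single_of_deg_eq hν n heq with hmem | ⟨a, ha, hdeg⟩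
  · exact hmem
  have hn : (0 : ℚ) < n := by exact_mod_cast Nat.pos_of_ne_zero (NeZero.ne n)
  rw [deg_step_iterate_self] at hdeg
  linarith

lemma shiftedT_pow_mem_Vlt {x : (ℤ × Fin n) →₀ ℂ} (hx : x ∈ Vle ν α) :
    (shiftedT ν c α ^ n) x ∈ Vlt ν α := by
  refine (span_le (p := (Vlt ν α).comap (shiftedT ν c α ^ n))).mpr ?_ hx
  rintro _ ⟨k, i, hki, rfl⟩
  exact shiftedT_pow_single_mem_Vlt hν (p := (k, i)) hki

end GaussManin

open GaussManin in
theorem stmt16_general (n : ℕ) [NeZero n] (ν : Fin n → ℚ) (c0 t : ℂ)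
    (h1 : ∀ i j : Fin n, (i : ℕ) + 1 = (j : ℕ) → ν j - ν i ≤ 1)
    (h2 : t ≠ 0 →
      ν ⟨0, Nat.pos_of_ne_zero (NeZero.ne n)⟩
        - ν ⟨n - 1, Nat.sub_lt (Nat.pos_of_ne_zero (NeZero.ne n)) Nat.one_pos⟩ ≤ 1) :
    ∀ (α : ℚ) (x : (ℤ × Fin n) →₀ ℂ),
      x ∈ Submodule.span ℂ
        {y | ∃ (k : ℤ) (i : Fin n), ν i - (k : ℚ) ≤ α ∧ y = Finsupp.single (k, i) (1 : ℂ)} →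
      ∃ m : ℕ,
        (((stmt16T n ν (c0 * t) + (α : ℂ) • LinearMap.id : Module.End ℂ ((ℤ × Fin n) →₀ ℂ)) ^ m)) x ∈
          Submodule.span ℂ
            {y | ∃ (k : ℤ) (i : Fin n), ν i - (k : ℚ) < α ∧ y = Finsupp.single (k, i) (1 : ℂ)} := by
  intro α x hx
  have hν := le_add_one_of_stepCoeff_ne_zero (c := c0 * t) h1
    fun hc => h2 (right_ne_zero_of_mul hc)
  exact ⟨n, shiftedT_pow_mem_Vlt hν hx⟩

/-- If the spectral candidates satisfy `νᵢ - ν_{i-1} ≤ 1` (and `ν₁ - νₙ ≤ 1` when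
`t ≠ 0`), then for the filtration `Ṽ_α` spanned by the `τ^k ωᵢ` with `νᵢ - k ≤ α`,
the operator `τ∂_τ + α` is nilpotent on each graded piece `gr^Ṽ_α 𝐆`: some power of it
maps `Ṽ_α` into `Ṽ_{<α}`.  (Hence `Ṽ` is the canonical V-filtration and the `νᵢ` are
the spectral numbers at infinity.) -/
theorem stmt16 (n : ℕ) [NeZero n] (ν : Fin n → ℚ) (c0 t : ℂ) (hc0 : c0 ≠ 0)
    (h1 : ∀ i j : Fin n, (i : ℕ) + 1 = (j : ℕ) → ν j - ν i ≤ 1)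
    (h2 : t ≠ 0 →
      ν ⟨0, Nat.pos_of_ne_zero (NeZero.ne n)⟩
        - ν ⟨n - 1, Nat.sub_lt (Nat.pos_of_ne_zero (NeZero.ne n)) Nat.one_pos⟩ ≤ 1) :
    ∀ (α : ℚ) (x : (ℤ × Fin n) →₀ ℂ),
      x ∈ Submodule.span ℂ
        {y | ∃ (k : ℤ) (i : Fin n), ν i - (k : ℚ) ≤ α ∧ y = Finsupp.single (k, i) (1 : ℂ)} →
      ∃ m : ℕ,
        (((stmt16T n ν (c0 * t) + (α : ℂ) • LinearMap.id : Module.End ℂ ((ℤ × Fin n) →₀ ℂ)) ^ m)) x ∈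
          Submodule.span ℂ
            {y | ∃ (k : ℤ) (i : Fin n), ν i - (k : ℚ) < α ∧ y = Finsupp.single (k, i) (1 : ℂ)} :=
  stmt16_general n ν c0 t h1 h2
end

section
/- Let $(\nu_1, \dots, \nu_n)$ be a finite sequence of rational numbers, and consider the rewriting step: whenever there is an index $i \in \{2,\dots,n\}$ with $\nu_i - \nu_{i-1} > 1$, replace $\nu_i$ by $\nu_{i-1}+1$ and $\nu_{i-1}$ by $\nu_i - 1$ (a 'sorting with shift' swap). Then this rewriting process terminates after finitely many steps with a sequence satisfying $\nu_i - \nu_{i-1} \le 1$ for all $i \in \{2,\dots,n\}$. -/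
/-- One step of Algorithm 1 (a "sorting with shift" swap): if some consecutive pair
satisfies `μ i - μ (i-1) > 1`, replace `μ i` by `μ (i-1) + 1` and `μ (i-1)` by
`μ i - 1`. -/
def SwapStep (n : ℕ) (μ μ' : Fin n → ℚ) : Prop :=
  ∃ i j : Fin n, (j : ℕ) + 1 = (i : ℕ) ∧ μ i - μ j > 1 ∧
    μ' = Function.update (Function.update μ i (μ j + 1)) j (μ i - 1)

section Aux

variable {n : ℕ}

lemma swap_ne {μ μ' : Fin n → ℚ} {i j : Fin n} (hij : (j : ℕ) + 1 = (i : ℕ)) : i ≠ j := by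
  intro h; subst h; omega

lemma swap_vals {μ μ' : Fin n → ℚ} {i j : Fin n} (hij : (j : ℕ) + 1 = (i : ℕ))
    (heq : μ' = Function.update (Function.update μ i (μ j + 1)) j (μ i - 1)) :
    μ' j = μ i - 1 ∧ μ' i = μ j + 1 ∧ ∀ l, l ≠ i → l ≠ j → μ' l = μ l := by
  have hne : i ≠ j := swap_ne (μ := μ) (μ' := μ') hij
  subst heq
  refine ⟨Function.update_self _ _ _, ?_, ?_⟩
  · rw [Function.update_of_ne hne, Function.update_self]
  · intro l hli hlj
    rw [Function.update_of_ne hlj, Function.update_of_ne hli]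

end Aux

/-- Termination of Algorithm 1: starting from any sequence `(ν₁, …, νₙ)` of rationals,
the rewriting process terminates after finitely many steps (there is no infinite chain
of swap steps), and any terminal sequence satisfies `νᵢ - ν_{i-1} ≤ 1` for all
`i ∈ {2,…,n}`. -/
theorem stmt17 (n : ℕ) :
    (∀ ν : Fin n → ℚ, ¬ ∃ seq : ℕ → Fin n → ℚ,
        seq 0 = ν ∧ ∀ k : ℕ, SwapStep n (seq k) (seq (k + 1))) ∧
    (∀ μ : Fin n → ℚ, (¬ ∃ μ' : Fin n → ℚ, SwapStep n μ μ') →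
        ∀ i j : Fin n, (j : ℕ) + 1 = (i : ℕ) → μ i - μ j ≤ 1) := by
  constructor
  · rintro ν ⟨seq, h0, hstep⟩
    obtain ⟨i0, j0, -, -, -⟩ := hstep 0
    have hne : Nonempty (Fin n) := ⟨i0⟩
    have huniv : (Finset.univ : Finset (Fin n)).Nonempty := Finset.univ_nonempty
    set D : ℤ := ∏ l : Fin n, ((ν l).den : ℤ) with hD
    have hDpos : 0 < D := Finset.prod_pos (fun l _ => by positivity)
    have hDQpos : (0 : ℚ) < (D : ℚ) := by exact_mod_cast hDpos
    -- integrality invariant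
    have hint : ∀ k l, ∃ z : ℤ, (D : ℚ) * seq k l = z := by
      intro k
      induction k with
      | zero =>
        intro l
        rw [h0]
        obtain ⟨e, he⟩ : ((ν l).den : ℤ) ∣ D := Finset.dvd_prod_of_mem _ (Finset.mem_univ l)
        refine ⟨e * (ν l).num, ?_⟩
        have h1 : ((ν l).den : ℚ) * ν l = ((ν l).num : ℚ) := by
          rw [mul_comm]
          exact_mod_cast Rat.mul_den_eq_num (ν l)
        rw [he]
        push_cast
        rw [mul_comm ((ν l).den : ℚ) (e : ℚ), mul_assoc, h1]
      | succ k ih =>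
        intro l
        obtain ⟨i, j, hij, hgt, heq⟩ := hstep k
        obtain ⟨hj, hi, hoth⟩ := swap_vals hij heq
        by_cases hlj : l = j
        · subst hlj
          obtain ⟨z, hz⟩ := ih i
          exact ⟨z - D, by rw [hj]; push_cast; rw [mul_sub, hz]; ring⟩
        · by_cases hli : l = i
          · subst hli
            obtain ⟨z, hz⟩ := ih j
            exact ⟨z + D, by rw [hi]; push_cast; rw [mul_add, hz]; ring⟩
          · rw [hoth l hli hlj]; exact ih l
    -- lower bound invariant
    set m : ℚ := Finset.univ.inf' huniv ν with hm
    have hlow : ∀ k l, m ≤ seq k l := by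
      intro k
      induction k with
      | zero => intro l; rw [h0]; exact Finset.inf'_le _ (Finset.mem_univ l)
      | succ k ih =>
        intro l
        obtain ⟨i, j, hij, hgt, heq⟩ := hstep k
        obtain ⟨hj, hi, hoth⟩ := swap_vals hij heq
        by_cases hlj : l = j
        · subst hlj; rw [hj]; linarith [ih l, hgt]
        · by_cases hli : l = i
          · subst hli; rw [hi]; linarith [ih j]
          · rw [hoth l hli hlj]; exact ih l
    -- measure
    set F : (Fin n → ℚ) → ℚ := fun μ => ∑ l : Fin n, (l : ℚ) * μ l with hF
    have hGstep : ∀ k, (D : ℚ) * F (seq (k + 1)) ≤ (D : ℚ) * F (seq k) - 1 := by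
      intro k
      obtain ⟨i, j, hij, hgt, heq⟩ := hstep k
      obtain ⟨hj, hi, hoth⟩ := swap_vals hij heq
      have hine : i ≠ j := swap_ne (μ := seq k) (μ' := seq (k+1)) hij
      have hdiff : F (seq (k + 1)) - F (seq k)
          = (i : ℚ) * (seq (k+1) i - seq k i) + (j : ℚ) * (seq (k+1) j - seq k j) := by
        rw [hF, ← Finset.sum_sub_distrib]
        have : ∑ l : Fin n, ((l : ℚ) * seq (k+1) l - (l : ℚ) * seq k l)
            = ∑ l ∈ ({i, j} : Finset (Fin n)), ((l : ℚ) * seq (k+1) l - (l : ℚ) * seq k l) := by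
          refine (Finset.sum_subset (Finset.subset_univ _) ?_).symm
          intro x _ hx
          simp only [Finset.mem_insert, Finset.mem_singleton, not_or] at hx
          rw [hoth x hx.1 hx.2]; ring
        rw [this, Finset.sum_pair hine]; ring
      have hiq : (i : ℚ) = (j : ℚ) + 1 := by exact_mod_cast hij.symm
      have hFeq : F (seq (k + 1)) = F (seq k) - (seq k i - seq k j - 1) := by
        rw [hi, hj, hiq] at hdiff
        linear_combination hdiff
      obtain ⟨zi, hzi⟩ := hint k i
      obtain ⟨zj, hzj⟩ := hint k j
      have hZ : (D : ℚ) * (seq k i - seq k j - 1) = ((zi - zj - D : ℤ) : ℚ) := by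
        push_cast; rw [mul_sub, mul_sub, hzi, hzj]; ring
      have hZpos : (0 : ℚ) < ((zi - zj - D : ℤ) : ℚ) := by
        rw [← hZ]; have : (0:ℚ) < seq k i - seq k j - 1 := by linarith
        positivity
      have hZ1 : (1 : ℚ) ≤ ((zi - zj - D : ℤ) : ℚ) := by
        have : (0 : ℤ) < zi - zj - D := by exact_mod_cast hZpos
        exact_mod_cast this
      rw [hFeq, mul_sub, hZ]
      linarith
    have hGk : ∀ k : ℕ, (D : ℚ) * F (seq k) ≤ (D : ℚ) * F (seq 0) - k := by
      intro k
      induction k with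
      | zero => simp
      | succ k ih =>
        have := hGstep k
        push_cast
        linarith
    have hB : ∀ k, (D : ℚ) * (∑ l : Fin n, (l : ℚ) * m) ≤ (D : ℚ) * F (seq k) := by
      intro k
      apply mul_le_mul_of_nonneg_left _ hDQpos.le
      apply Finset.sum_le_sum
      intro l _
      exact mul_le_mul_of_nonneg_left (hlow k l) (by positivity)
    obtain ⟨k, hk⟩ := exists_nat_gt ((D : ℚ) * F (seq 0) - (D : ℚ) * (∑ l : Fin n, (l : ℚ) * m))
    have := hB k
    have := hGk k
    linarith
  · intro μ hterm i j hij
    by_contra h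
    push_neg at h
    exact hterm ⟨_, i, j, hij, h, rfl⟩
end

section
/- Let $h = x_1 x_2 \cdots x_n$ (normal crossing divisor) and $f = x_1 + \cdots + x_n$. Then in the Brieskorn lattice $G = \Omega^{n-1}(\log h)[\tau^{-1}]/(\tau^{-1}d - df\wedge)\Omega^{n-2}(\log h)[\tau^{-1}]$, the basis $\omega_i = (-n)^{i-1}\big(\prod_{j=1}^{i-1}x_j\big)\alpha$ for $i = 1,\dots,n$ (with $\alpha = \iota_E(\mathrm{vol}/h)$) satisfies $\partial_\tau(\underline{\omega}) = \underline{\omega}\cdot(\Omega_0 + \tau^{-1}A_\infty)$ with $A_\infty = -\mathrm{diag}(0,1,\dots,n-1)$ and $\Omega_0$ the companion matrix with subdiagonal $1$'s and top-right entry $t$. In particular, the spectrum of $(G_t,\nabla)$ at infinity is $(0,1,\dots,n-1)$ for every $t$. -/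
open MvPolynomial

private lemma aux_card (n i : ℕ) (hi : i ≤ n) :
    (Finset.univ.filter (fun m : Fin n => (m:ℕ) < i)).card = i := by
  rcases eq_or_lt_of_le hi with rfl | hlt
  · have h2 : (Finset.univ.filter (fun m : Fin i => (m:ℕ) < i)) = Finset.univ := by
      ext m; simp [m.isLt]
    simp [h2]
  · have h2 : (Finset.univ.filter (fun m : Fin n => (m:ℕ) < i)) = Finset.Iio ⟨i, hlt⟩ := by
      ext m; simp [Fin.lt_def]
    rw [h2, Fin.card_Iio]

private lemma aux_pderiv_not_mem {n : ℕ} (m : Fin n) (s : Finset (Fin n)) (h : m ∉ s) :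
    pderiv m (∏ j ∈ s, (X j : MvPolynomial (Fin n) ℂ)) = 0 := by
  classical
  induction s using Finset.induction_on with
  | empty => simp
  | @insert a s hns ih =>
    have hma : m ≠ a := fun e => h (e ▸ Finset.mem_insert_self a s)
    rw [Finset.prod_insert hns, pderiv_mul, pderiv_X_of_ne hma.symm,
      ih (fun hm => h (Finset.mem_insert_of_mem hm))]
    ring

private lemma aux_pderiv_mem {n : ℕ} (m : Fin n) (s : Finset (Fin n)) (h : m ∈ s) :
    X m * pderiv m (∏ j ∈ s, (X j : MvPolynomial (Fin n) ℂ)) = ∏ j ∈ s, X j := by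
  classical
  rw [← Finset.mul_prod_erase s _ h, pderiv_mul, pderiv_X_self,
    aux_pderiv_not_mem m _ (Finset.notMem_erase m s)]
  ring

private lemma key (n : ℕ) (G : Type) [AddCommGroup G] [Module ℂ G]
    (cl : ℤ → MvPolynomial (Fin n) ℂ →ₗ[ℂ] G)
    (hGM : ∀ (k : ℤ) (g : MvPolynomial (Fin n) ℂ) (a b : Fin n),
      cl (k + 1) (g * (X a - X b)) = cl k (X a * pderiv a g - X b * pderiv b g))
    (i : ℕ) (hi : i < n) :
    cl 0 ((∑ m : Fin n, X m) * ∏ m ∈ Finset.univ.filter (fun m : Fin n => (m:ℕ) < i), X m)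
      = (n : ℂ) • cl 0 (∏ m ∈ Finset.univ.filter (fun m : Fin n => (m:ℕ) < i + 1), X m)
        + (i : ℂ) • cl (-1) (∏ m ∈ Finset.univ.filter (fun m : Fin n => (m:ℕ) < i), X m) := by
  classical
  set s := Finset.univ.filter (fun m : Fin n => (m:ℕ) < i) with hs
  set P : MvPolynomial (Fin n) ℂ := ∏ m ∈ s, X m with hP
  set b0 : Fin n := ⟨i, hi⟩ with hb0
  have hb0s : b0 ∉ s := by simp [hs, hb0]
  have hmem : ∀ m : Fin n, (m:ℕ) < i ↔ m ∈ s := by intro m; simp [hs]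
  have step : ∀ m : Fin n, cl 0 (X m * P)
      = cl 0 (X b0 * P) + (if (m:ℕ) < i then cl (-1) P else 0) := by
    intro m
    by_cases hm : (m:ℕ) < i
    · have hP1 : X m * pderiv m P = P := aux_pderiv_mem m s ((hmem m).1 hm)
      have hP2 : pderiv b0 P = (0 : MvPolynomial (Fin n) ℂ) := aux_pderiv_not_mem b0 s hb0s
      have h2 := hGM (-1) P m b0
      rw [hP1, hP2] at h2
      norm_num at h2
      rw [show P * (X m - X b0) = X m * P - X b0 * P by ring, map_sub] at h2
      rw [if_pos hm, ← h2]; abel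
    · by_cases hmb : m = b0
      · rw [if_neg hm, add_zero, hmb]
      · have hP1 : pderiv m P = (0 : MvPolynomial (Fin n) ℂ) :=
          aux_pderiv_not_mem m s (fun hms => hm ((hmem m).2 hms))
        have hP2 : pderiv b0 P = (0 : MvPolynomial (Fin n) ℂ) := aux_pderiv_not_mem b0 s hb0s
        have h2 := hGM (-1) P m b0
        rw [hP1, hP2] at h2
        norm_num at h2
        rw [show P * (X m - X b0) = X m * P - X b0 * P by ring, map_sub,
          sub_eq_zero] at h2
        rw [if_neg hm, add_zero, h2]
  have hins : Finset.univ.filter (fun m : Fin n => (m:ℕ) < i + 1) = insert b0 s := by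
    ext m
    simp only [Finset.mem_filter, Finset.mem_univ, true_and, Finset.mem_insert, hs, hb0,
      Fin.ext_iff]
    omega
  have hsum : cl 0 ((∑ m : Fin n, X m) * P) = ∑ m : Fin n, cl 0 (X m * P) := by
    rw [Finset.sum_mul, map_sum]
  rw [hsum]
  calc ∑ m : Fin n, cl 0 (X m * P)
      = ∑ m : Fin n, (cl 0 (X b0 * P) + if (m:ℕ) < i then cl (-1) P else 0) :=
        Finset.sum_congr rfl fun m _ => step m
    _ = (n : ℂ) • cl 0 (X b0 * P) + (i : ℂ) • cl (-1) P := by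
        rw [Finset.sum_add_distrib, Finset.sum_const, ← Finset.sum_filter, Finset.sum_const,
          ← hs, aux_card n i hi.le, Finset.card_univ, Fintype.card_fin,
          ← Nat.cast_smul_eq_nsmul ℂ, ← Nat.cast_smul_eq_nsmul ℂ]
    _ = (n : ℂ) • cl 0 (∏ m ∈ Finset.univ.filter (fun m : Fin n => (m:ℕ) < i + 1), X m)
          + (i : ℂ) • cl (-1) P := by
        rw [hins, Finset.prod_insert hb0s, ← hP]

/-- The Brieskorn lattice of the normal crossing divisor `h = x₁⋯xₙ` with
`f = x₁ + ⋯ + xₙ`.  `G` models the Gauss–Manin system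
`Ω^{n-1}(log h)[τ,τ⁻¹]/(d - τ df∧)Ω^{n-2}(log h)[τ,τ⁻¹]`, where
`Ω^{n-1}(log h) ≅ ℂ[x₁,…,xₙ]·α` and `cl k g` denotes the class of `τ^k g α`.
The hypothesis `hGM` is the Gauss–Manin relation coming from the logarithmic fields
`ξ = x_a ∂_a - x_b ∂_b ∈ Der(-log h)₀` (of trace zero):
`τ g ξ(f) α = ξ(g) α`.  Conclusion: the basis
`ω_i = (-n)^i (∏_{m < i} x_m) α` (zero-based `i`) satisfies
`∂_τ(ω) = ω (Ω₀ + τ⁻¹ A_∞)` with `A_∞ = -diag(0,1,…,n-1)` and `Ω₀` the companion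
matrix with subdiagonal `1`'s and (suitably normalised) top-right entry `t` (where
`t` acts as multiplication by `h = ∏ x_m`): i.e.
`(-f)·ω_i ≡ ω_{i+1} - i τ⁻¹ ω_i` and
`(-f)·ω_{n-1} ≡ (-n)^n h α - (n-1) τ⁻¹ ω_{n-1}`.
In particular the spectrum of `(G_t, ∇)` at infinity is `(0, 1, …, n-1)`. -/
theorem stmt19 (n : ℕ) (hn : 2 ≤ n)
    (G : Type) [AddCommGroup G] [Module ℂ G]
    (cl : ℤ → MvPolynomial (Fin n) ℂ →ₗ[ℂ] G)
    (hGM : ∀ (k : ℤ) (g : MvPolynomial (Fin n) ℂ) (a b : Fin n),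
      cl (k + 1) (g * (X a - X b))
        = cl k (X a * pderiv a g - X b * pderiv b g)) :
    (∀ a b : Fin n, (a : ℕ) + 1 = (b : ℕ) →
      cl 0 ((-(∑ m : Fin n, X m))
          * (C ((-(n : ℂ)) ^ (a : ℕ)) * ∏ m ∈ Finset.univ.filter (fun m => m < a), X m))
        = cl 0 (C ((-(n : ℂ)) ^ (b : ℕ)) * ∏ m ∈ Finset.univ.filter (fun m => m < b), X m)
          - ((a : ℕ) : ℂ) •
            cl (-1) (C ((-(n : ℂ)) ^ (a : ℕ)) * ∏ m ∈ Finset.univ.filter (fun m => m < a), X m)) ∧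
    (cl 0 ((-(∑ m : Fin n, X m))
        * (C ((-(n : ℂ)) ^ (n - 1)) * ∏ m ∈ (Finset.univ : Finset (Fin n)).filter (fun m : Fin n => (m : ℕ) < n - 1), X m))
      = (-(n : ℂ)) ^ n • cl 0 (∏ m : Fin n, X m)
        - ((n - 1 : ℕ) : ℂ) •
          cl (-1) (C ((-(n : ℂ)) ^ (n - 1)) * ∏ m ∈ (Finset.univ : Finset (Fin n)).filter (fun m : Fin n => (m : ℕ) < n - 1), X m)) := by
  constructor
  · intro a b hab
    simp only [Fin.lt_def]
    set i := (a : ℕ) with hia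
    have hi : i < n := a.isLt
    have hkey := key n G cl hGM i hi
    set P : MvPolynomial (Fin n) ℂ :=
      ∏ m ∈ Finset.univ.filter (fun m : Fin n => (m:ℕ) < i), X m with hPdef
    set Q : MvPolynomial (Fin n) ℂ :=
      ∏ m ∈ Finset.univ.filter (fun m : Fin n => (m:ℕ) < i + 1), X m with hQdef
    have hbfilter : (Finset.univ.filter (fun m : Fin n => (m:ℕ) < (b:ℕ))) =
        Finset.univ.filter (fun m : Fin n => (m:ℕ) < i + 1) := by rw [← hab]
    rw [hbfilter]
    have e1 : (-(∑ m : Fin n, X m)) * (C ((-(n:ℂ))^i) * P)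
        = (-((-(n:ℂ))^i)) • ((∑ m : Fin n, X m) * P) := by
      rw [smul_eq_C_mul, map_neg]; ring
    have e2 : C ((-(n:ℂ))^(b:ℕ)) * Q = ((-(n:ℂ))^(b:ℕ)) • Q := (smul_eq_C_mul _ _).symm
    have e3 : C ((-(n:ℂ))^i) * P = ((-(n:ℂ))^i) • P := (smul_eq_C_mul _ _).symm
    rw [e1, e2, e3, map_smul, map_smul, map_smul, hkey, ← hab]
    have hpow : (-(n:ℂ))^(i+1) = (-(n:ℂ))^i * (-(n:ℂ)) := pow_succ _ _
    rw [hpow]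
    module
  · have hi : n - 1 < n := by omega
    have hkey := key n G cl hGM (n-1) hi
    have hfull : (Finset.univ.filter (fun m : Fin n => (m:ℕ) < n - 1 + 1)) =
        (Finset.univ : Finset (Fin n)) := by
      ext m; simpa using by omega
    rw [hfull] at hkey
    set P : MvPolynomial (Fin n) ℂ :=
      ∏ m ∈ Finset.univ.filter (fun m : Fin n => (m:ℕ) < n - 1), X m with hPdef
    have e1 : (-(∑ m : Fin n, X m)) * (C ((-(n:ℂ))^(n-1)) * P)
        = (-((-(n:ℂ))^(n-1))) • ((∑ m : Fin n, X m) * P) := by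
      rw [smul_eq_C_mul, map_neg]; ring
    have e3 : C ((-(n:ℂ))^(n-1)) * P = ((-(n:ℂ))^(n-1)) • P := (smul_eq_C_mul _ _).symm
    have hpow : (-(n:ℂ))^n = (-(n:ℂ))^(n-1) * (-(n:ℂ)) := by
      rw [← pow_succ]; congr 1; omega
    rw [e1, e3, map_smul, map_smul, hkey, hpow]
    module
end
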